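/- Let α : ℝ → ℝ³ be a smooth unit-speed curve with κ > 0 everywhere. Then α is a helix if and only if det(α''(t), α'''(t), α⁽⁴⁾(t)) = 0 for all t. -/

import Mathlib

noncomputable section
open scoped RealInnerProductSpace
open Filter Asymptotics

/-- ℝ³ as a Euclidean space. -/
abbrev E3 := EuclideanSpace ℝ (Fin 3)

/-- The point (x,y,z) of ℝ³. -/
def mk3 (x y z : ℝ) : E3 := (WithLp.equiv 2 (Fin 3 → ℝ)).symm ![x, y, z]

/-- Cross product on ℝ³. -/
def cross3 (u v : E3) : E3 :=
  mk3 (u 1 * v 2 - u 2 * v 1) (u 2 * v 0 - u 0 * v 2) (u 0 * v 1 - u 1 * v 0)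

/-- Determinant of three vectors of ℝ³ (scalar triple product). -/
def det3 (u v w : E3) : ℝ :=
  u 0 * (v 1 * w 2 - v 2 * w 1) - u 1 * (v 0 * w 2 - v 2 * w 0) +
    u 2 * (v 0 * w 1 - v 1 * w 0)

@[simp] lemma mk3_apply_0 (x y z : ℝ) : mk3 x y z 0 = x := rfl
@[simp] lemma mk3_apply_1 (x y z : ℝ) : mk3 x y z 1 = y := rfl
@[simp] lemma mk3_apply_2 (x y z : ℝ) : mk3 x y z 2 = z := rfl

lemma inner3 (u v : E3) : ⟪u, v⟫ = u 0 * v 0 + u 1 * v 1 + u 2 * v 2 := by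
  simp [PiLp.inner_apply, Fin.sum_univ_three, mul_comm]

lemma ext3 {u v : E3} (h0 : u 0 = v 0) (h1 : u 1 = v 1) (h2 : u 2 = v 2) : u = v := by
  ext i; fin_cases i <;> assumption

@[simp] lemma smul3 (r : ℝ) (u : E3) (i : Fin 3) : (r • u) i = r * u i := rfl
@[simp] lemma add3 (u v : E3) (i : Fin 3) : (u + v) i = u i + v i := rfl
@[simp] lemma sub3 (u v : E3) (i : Fin 3) : (u - v) i = u i - v i := rfl
@[simp] lemma cross3_0 (u v : E3) : cross3 u v 0 = u 1 * v 2 - u 2 * v 1 := rfl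
@[simp] lemma cross3_1 (u v : E3) : cross3 u v 1 = u 2 * v 0 - u 0 * v 2 := rfl
@[simp] lemma cross3_2 (u v : E3) : cross3 u v 2 = u 0 * v 1 - u 1 * v 0 := rfl

@[simp] lemma zero3 (i : Fin 3) : (0:E3) i = 0 := rfl

lemma det3_eq_inner (u v w : E3) : det3 u v w = ⟪w, cross3 u v⟫ := by
  rw [inner3]; simp [det3]; ring

lemma inner_cross_left (u v : E3) : ⟪u, cross3 u v⟫ = 0 := by rw [inner3]; simp; ring
lemma inner_cross_right (u v : E3) : ⟪v, cross3 u v⟫ = 0 := by rw [inner3]; simp; ring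

lemma lagrange (u v : E3) : ⟪cross3 u v, cross3 u v⟫ = ⟪u,u⟫ * ⟪v,v⟫ - ⟪u,v⟫^2 := by
  rw [inner3, inner3, inner3, inner3]; simp; ring

lemma triple (a b c : E3) : cross3 a (cross3 b c) = ⟪a,c⟫ • b - ⟪a,b⟫ • c := by
  rw [inner3, inner3]; apply ext3 <;> simp <;> ring

lemma cramer (u v w n : E3) :
    det3 u v w • n = ⟪n,u⟫ • cross3 v w + ⟪n,v⟫ • cross3 w u + ⟪n,w⟫ • cross3 u v := by
  rw [inner3, inner3, inner3]; apply ext3 <;> simp [det3] <;> ring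

lemma cross3_swap (u v : E3) : cross3 u v = - cross3 v u := by
  apply ext3 <;> simp <;> ring

@[simp] lemma cross3_self (u : E3) : cross3 u u = 0 := by
  apply ext3 <;> simp <;> ring

lemma det3_combo (T N B : E3) (p0 p1 p2 q0 q1 q2 r0 r1 r2 : ℝ) :
    det3 (p0•T+p1•N+p2•B) (q0•T+q1•N+q2•B) (r0•T+r1•N+r2•B) =
      (p0*(q1*r2 - q2*r1) - p1*(q0*r2 - q2*r0) + p2*(q0*r1 - q1*r0)) * det3 T N B := by
  simp [det3]; ring

lemma hasDerivAt_comp_proj {f : ℝ → E3} {f' : E3} {t : ℝ} (h : HasDerivAt f f' t) (i : Fin 3) :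
    HasDerivAt (fun s => f s i) (f' i) t := by
  have := (EuclideanSpace.proj i (𝕜 := ℝ)).hasFDerivAt.comp_hasDerivAt t h
  exact this

lemma fin3_all (P : Fin 3 → Prop) (h0 : P 0) (h1 : P 1) (h2 : P 2) : ∀ i, P i := by
  intro i; fin_cases i; exacts [h0, h1, h2]

lemma hasDerivAt_E3 {f : ℝ → E3} {f' : E3} {t : ℝ}
    (h : ∀ i, HasDerivAt (fun s => f s i) (f' i) t) : HasDerivAt f f' t := by
  let e : E3 ≃L[ℝ] (Fin 3 → ℝ) := PiLp.continuousLinearEquiv 2 ℝ (fun _ : Fin 3 => ℝ)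
  rw [hasDerivAt_iff_hasFDerivAt, ← e.comp_hasFDerivAt_iff]
  apply hasFDerivAt_pi''
  intro i
  exact (h i).hasFDerivAt

lemma HasDerivAt.cross3' {f g : ℝ → E3} {f' g' : E3} {t : ℝ}
    (hf : HasDerivAt f f' t) (hg : HasDerivAt g g' t) :
    HasDerivAt (fun s => cross3 (f s) (g s)) (cross3 f' (g t) + cross3 (f t) g') t := by
  apply hasDerivAt_E3
  apply fin3_all (fun i => HasDerivAt (fun s => cross3 (f s) (g s) i) ((cross3 f' (g t) + cross3 (f t) g') i) t) <;>
  · simp only [cross3_0, cross3_1, cross3_2, add3]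
    refine (((hasDerivAt_comp_proj hf _).mul (hasDerivAt_comp_proj hg _)).sub
      ((hasDerivAt_comp_proj hf _).mul (hasDerivAt_comp_proj hg _))).congr_deriv (Eq.symm ?_)
    ring

lemma cross3_add_right (u v w : E3) : cross3 u (v + w) = cross3 u v + cross3 u w := by
  apply ext3 <;> simp <;> ring

lemma cross3_smul_right (r : ℝ) (u v : E3) : cross3 u (r • v) = r • cross3 u v := by
  apply ext3 <;> simp <;> ring

lemma inner_self_pos' {a : E3} (ha : a ≠ 0) : (0:ℝ) < ⟪a,a⟫ := by
  rw [real_inner_self_eq_norm_sq]; exact pow_pos (norm_pos_iff.2 ha) 2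

section Key
variable {T a b c : E3}

lemma frenet_setup (hT : ⟪T,T⟫ = 1) (hTa : ⟪T,a⟫ = 0) (ha : a ≠ 0) :
    ∀ x : E3, x = ⟪x,T⟫ • T + (⟪x, (Real.sqrt ⟪a,a⟫)⁻¹ • a⟫) • ((Real.sqrt ⟪a,a⟫)⁻¹ • a)
      + ⟪x, cross3 T ((Real.sqrt ⟪a,a⟫)⁻¹ • a)⟫ • cross3 T ((Real.sqrt ⟪a,a⟫)⁻¹ • a) := by
  intro x
  set k := Real.sqrt ⟪a,a⟫ with hkdef
  have hpos : (0:ℝ) < ⟪a,a⟫ := inner_self_pos' ha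
  have hk2 : k^2 = ⟪a,a⟫ := Real.sq_sqrt hpos.le
  have hkpos : 0 < k := Real.sqrt_pos.2 hpos
  have hkne : k ≠ 0 := ne_of_gt hkpos
  set N : E3 := k⁻¹ • a with hN
  set B : E3 := cross3 T N with hB
  have hNN : ⟪N,N⟫ = 1 := by
    rw [hN, real_inner_smul_left, real_inner_smul_right, ← hk2]
    field_simp
  have hTN : ⟪T,N⟫ = 0 := by rw [hN, real_inner_smul_right, hTa]; ring
  have hBB : ⟪B,B⟫ = 1 := by rw [hB, lagrange, hT, hNN, hTN]; ring
  have hdet : det3 T N B = 1 := by rw [hB, det3_eq_inner, ← hB, hBB]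
  have hNB : cross3 N B = T := by
    rw [hB, triple, hNN, real_inner_comm T N, hTN]; simp
  have hBT : cross3 B T = N := by
    rw [cross3_swap, hB, triple, hTN, hT]; simp
  have hc := cramer T N B x
  rw [hdet, one_smul] at hc
  calc x = ⟪x,T⟫ • cross3 N B + ⟪x,N⟫ • cross3 B T + ⟪x,B⟫ • cross3 T N := hc
  _ = ⟪x,T⟫ • T + ⟪x,N⟫ • N + ⟪x,B⟫ • B := by rw [hNB, hBT, ← hB]

lemma frenet_key1 (hT : ⟪T,T⟫ = 1) (hTa : ⟪T,a⟫ = 0)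
    (hTb : ⟪T,b⟫ = -⟪a,a⟫) (hTc : ⟪T,c⟫ = -3*⟪a,b⟫) (ha : a ≠ 0) :
    det3 a b c = ⟪a,a⟫ * det3 T a c - 3*⟪a,b⟫ * det3 T a b := by
  set k := Real.sqrt ⟪a,a⟫ with hkdef
  have hpos : (0:ℝ) < ⟪a,a⟫ := inner_self_pos' ha
  have hk2 : k^2 = ⟪a,a⟫ := Real.sq_sqrt hpos.le
  have hkpos : 0 < k := Real.sqrt_pos.2 hpos
  have hkne : k ≠ 0 := ne_of_gt hkpos
  set N : E3 := k⁻¹ • a with hN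
  set B : E3 := cross3 T N with hB
  have expand := frenet_setup hT hTa ha
  rw [← hkdef, ← hN, ← hB] at expand
  have haN : a = k • N := by rw [hN, smul_smul]; field_simp; rw [one_smul]
  have haT : a = (0:ℝ) • T + k • N + (0:ℝ) • B := by rw [haN]; module
  have hbX : b = (-⟪a,a⟫) • T + ⟪b,N⟫ • N + ⟪b,B⟫ • B := by
    conv_lhs => rw [expand b]
    rw [real_inner_comm T b, hTb]
  have hcX : c = (-3*⟪a,b⟫) • T + ⟪c,N⟫ • N + ⟪c,B⟫ • B := by
    conv_lhs => rw [expand c]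
    rw [real_inner_comm T c, hTc]
  have hab : ⟪a,b⟫ = k * ⟪b,N⟫ := by
    rw [haN, real_inner_smul_left, real_inner_comm]
  have hTX : T = (1:ℝ) • T + (0:ℝ) • N + (0:ℝ) • B := by module
  clear_value N B
  have e1 := det3_combo T N B 0 k 0 (-⟪a,a⟫) ⟪b,N⟫ ⟪b,B⟫ (-3*⟪a,b⟫) ⟪c,N⟫ ⟪c,B⟫
  rw [← haT, ← hbX, ← hcX] at e1
  have e2 := det3_combo T N B 1 0 0 0 k 0 (-3*⟪a,b⟫) ⟪c,N⟫ ⟪c,B⟫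
  rw [← hTX, ← haT, ← hcX] at e2
  have e3 := det3_combo T N B 1 0 0 0 k 0 (-⟪a,a⟫) ⟪b,N⟫ ⟪b,B⟫
  rw [← hTX, ← haT, ← hbX] at e3
  rw [e1, e2, e3, hab, ← hk2]
  ring

lemma frenet_key2 (hT : ⟪T,T⟫ = 1) (hTa : ⟪T,a⟫ = 0)
    (hTb : ⟪T,b⟫ = -⟪a,a⟫) (ha : a ≠ 0) :
    det3 T a b • a = ⟪a,b⟫ • cross3 T a - ⟪a,a⟫ • cross3 T b := by
  set k := Real.sqrt ⟪a,a⟫ with hkdef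
  have hpos : (0:ℝ) < ⟪a,a⟫ := inner_self_pos' ha
  have hk2 : k^2 = ⟪a,a⟫ := Real.sq_sqrt hpos.le
  have hkpos : 0 < k := Real.sqrt_pos.2 hpos
  have hkne : k ≠ 0 := ne_of_gt hkpos
  set N : E3 := k⁻¹ • a with hN
  set B : E3 := cross3 T N with hB
  have expand := frenet_setup hT hTa ha
  rw [← hkdef, ← hN, ← hB] at expand
  have hNN : ⟪N,N⟫ = 1 := by
    rw [hN, real_inner_smul_left, real_inner_smul_right, ← hk2]
    field_simp
  have hTN : ⟪T,N⟫ = 0 := by rw [hN, real_inner_smul_right, hTa]; ring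
  have hBB : ⟪B,B⟫ = 1 := by rw [hB, lagrange, hT, hNN, hTN]; ring
  have hdet : det3 T N B = 1 := by rw [hB, det3_eq_inner, ← hB, hBB]
  have haN : a = k • N := by rw [hN, smul_smul]; field_simp; rw [one_smul]
  have haT : a = (0:ℝ) • T + k • N + (0:ℝ) • B := by rw [haN]; module
  have hbX : b = (-⟪a,a⟫) • T + ⟪b,N⟫ • N + ⟪b,B⟫ • B := by
    conv_lhs => rw [expand b]
    rw [real_inner_comm T b, hTb]
  have hab : ⟪a,b⟫ = k * ⟪b,N⟫ := by
    rw [haN, real_inner_smul_left, real_inner_comm]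
  have hTX : T = (1:ℝ) • T + (0:ℝ) • N + (0:ℝ) • B := by module
  have hTB : cross3 T B = -N := by
    rw [hB, triple, hTN, hT]; module
  have hTN' : cross3 T N = B := hB.symm
  clear_value N B
  have e3 := det3_combo T N B 1 0 0 0 k 0 (-⟪a,a⟫) ⟪b,N⟫ ⟪b,B⟫
  rw [← hTX, ← haT, ← hbX] at e3
  have hca : cross3 T a = k • B := by rw [haN, cross3_smul_right, ← hB]
  have hcb : cross3 T b = ⟪b,N⟫ • B - ⟪b,B⟫ • N := by
    conv_lhs => rw [hbX]
    rw [cross3_add_right, cross3_add_right, cross3_smul_right, cross3_smul_right,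
      cross3_smul_right, cross3_self, hTB, hTN']
    module
  rw [e3, hdet, hca, hcb, hab, ← hk2]
  nth_rewrite 1 [haN]
  match_scalars <;> ring
end Key


/-- A smooth unit-speed curve α with κ = ‖α''‖ > 0 everywhere is a helix
iff det(α''(t), α'''(t), α⁽⁴⁾(t)) = 0 for all t. -/
theorem helix_iff_det_higher_derivatives
    (α : ℝ → E3)
    (hα : ContDiff ℝ (⊤ : ℕ∞) α)
    (hunit : ∀ t, ‖deriv α t‖ = 1)
    (hκpos : ∀ t, 0 < ‖iteratedDeriv 2 α t‖) :
    (∃ v : E3, ‖v‖ = 1 ∧ ∃ a : ℝ, ∀ t, ⟪deriv α t, v⟫ = a) ↔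
      ∀ t, det3 (iteratedDeriv 2 α t) (iteratedDeriv 3 α t) (iteratedDeriv 4 α t) = 0 := by
  set D : ℕ → ℝ → E3 := fun n => iteratedDeriv n α with hDdef
  have hDdiff : ∀ n : ℕ, Differentiable ℝ (D n) := by
    intro n
    exact hα.differentiable_iteratedDeriv n (by exact_mod_cast ENat.coe_lt_top n)
  have hd : ∀ n t, HasDerivAt (D n) (D (n+1) t) t := by
    intro n t
    have h1 := ((hDdiff n) t).hasDerivAt
    have h2 : D (n+1) = deriv (D n) := iteratedDeriv_succ
    rw [h2]
    exact h1
  have hderiv1 : deriv α = D 1 := iteratedDeriv_one.symm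
  have c1 : ∀ t, ⟪D 1 t, D 1 t⟫ = 1 := by
    intro t
    rw [real_inner_self_eq_norm_sq, ← hderiv1, hunit t]; norm_num
  have c2 : ∀ t, ⟪D 1 t, D 2 t⟫ = 0 := by
    intro t
    have h1 : HasDerivAt (fun s => ⟪D 1 s, D 1 s⟫) (⟪D 1 t, D 2 t⟫ + ⟪D 2 t, D 1 t⟫) t :=
      (hd 1 t).inner (𝕜 := ℝ) (hd 1 t)
    have h2 : HasDerivAt (fun s => ⟪D 1 s, D 1 s⟫) 0 t := by
      rw [funext c1]; exact hasDerivAt_const _ _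
    have h3 := h1.unique h2
    have h4 := real_inner_comm (D 1 t) (D 2 t)
    linarith
  have c3 : ∀ t, ⟪D 1 t, D 3 t⟫ = -⟪D 2 t, D 2 t⟫ := by
    intro t
    have h1 : HasDerivAt (fun s => ⟪D 1 s, D 2 s⟫) (⟪D 1 t, D 3 t⟫ + ⟪D 2 t, D 2 t⟫) t :=
      (hd 1 t).inner (𝕜 := ℝ) (hd 2 t)
    have h2 : HasDerivAt (fun s => ⟪D 1 s, D 2 s⟫) 0 t := by
      rw [funext c2]; exact hasDerivAt_const _ _
    have h3 := h1.unique h2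
    linarith
  have c4 : ∀ t, ⟪D 1 t, D 4 t⟫ = -3*⟪D 2 t, D 3 t⟫ := by
    intro t
    have h1 := ((hd 1 t).inner (𝕜 := ℝ) (hd 3 t)).add ((hd 2 t).inner (𝕜 := ℝ) (hd 2 t))
    have h2 : HasDerivAt (fun s => ⟪D 1 s, D 3 s⟫ + ⟪D 2 s, D 2 s⟫) 0 t := by
      have he : (fun s => ⟪D 1 s, D 3 s⟫ + ⟪D 2 s, D 2 s⟫) = fun _ => 0 :=
        funext fun s => by rw [c3 s]; ring
      rw [he]; exact hasDerivAt_const _ _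
    have h3 := h1.unique h2
    simp only [show (3+1 : ℕ) = 4 from rfl, show (1+1 : ℕ) = 2 from rfl,
      show (2+1 : ℕ) = 3 from rfl] at h3
    have h4 := real_inner_comm (D 2 t) (D 3 t)
    linarith
  have hane : ∀ t, D 2 t ≠ 0 := fun t => norm_pos_iff.1 (hκpos t)
  constructor
  · rintro ⟨v, hv, A, hA⟩ t
    have g1 : ∀ s, ⟪D 1 s, v⟫ = A := by intro s; rw [← hderiv1]; exact hA s
    have g2 : ∀ s, ⟪D 2 s, v⟫ = 0 := by
      intro s
      have h1 := (hd 1 s).inner (𝕜 := ℝ) (hasDerivAt_const s v)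
      have h2 : HasDerivAt (fun r => ⟪D 1 r, v⟫) 0 s := by
        rw [funext g1]; exact hasDerivAt_const _ _
      have h3 := h1.unique h2
      simpa using h3
    have g3 : ∀ s, ⟪D 3 s, v⟫ = 0 := by
      intro s
      have h1 := (hd 2 s).inner (𝕜 := ℝ) (hasDerivAt_const s v)
      have h2 : HasDerivAt (fun r => ⟪D 2 r, v⟫) 0 s := by
        rw [funext g2]; exact hasDerivAt_const _ _
      have h3 := h1.unique h2
      simpa using h3
    have g4 : ∀ s, ⟪D 4 s, v⟫ = 0 := by
      intro s
      have h1 := (hd 3 s).inner (𝕜 := ℝ) (hasDerivAt_const s v)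
      have h2 : HasDerivAt (fun r => ⟪D 3 r, v⟫) 0 s := by
        rw [funext g3]; exact hasDerivAt_const _ _
      have h3 := h1.unique h2
      simpa using h3
    have hcr := cramer (D 2 t) (D 3 t) (D 4 t) v
    rw [real_inner_comm (D 2 t) v, real_inner_comm (D 3 t) v, real_inner_comm (D 4 t) v,
      g2 t, g3 t, g4 t] at hcr
    simp only [zero_smul, add_zero, zero_add] at hcr
    rcases smul_eq_zero.1 hcr with h | h
    · exact h
    · exfalso; rw [h] at hv; simp at hv
  · intro H
    set k : ℝ → ℝ := fun t => Real.sqrt ⟪D 2 t, D 2 t⟫ with hkdef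
    have hpos : ∀ t, (0:ℝ) < ⟪D 2 t, D 2 t⟫ := fun t => inner_self_pos' (hane t)
    have hk2 : ∀ t, (k t)^2 = ⟪D 2 t, D 2 t⟫ := fun t => Real.sq_sqrt (hpos t).le
    have hkpos : ∀ t, 0 < k t := fun t => Real.sqrt_pos.2 (hpos t)
    have hkne : ∀ t, k t ≠ 0 := fun t => ne_of_gt (hkpos t)
    have hdk : ∀ t, HasDerivAt k (⟪D 2 t, D 3 t⟫ / k t) t := by
      intro t
      have h1 : HasDerivAt (fun s => ⟪D 2 s, D 2 s⟫) (⟪D 2 t, D 3 t⟫ + ⟪D 3 t, D 2 t⟫) t :=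
        (hd 2 t).inner (𝕜 := ℝ) (hd 2 t)
      have h2 := (Real.hasDerivAt_sqrt (ne_of_gt (hpos t))).comp t h1
      refine h2.congr_deriv (Eq.symm ?_)
      rw [real_inner_comm (D 2 t) (D 3 t)]
      rw [hkdef]
      field_simp
      ring
    set F : ℝ → ℝ := fun t => ⟪D 3 t, cross3 (D 1 t) (D 2 t)⟫ with hFdef
    have hFdet : ∀ t, F t = det3 (D 1 t) (D 2 t) (D 3 t) := fun t => (det3_eq_inner _ _ _).symm
    have hdF : ∀ t, HasDerivAt F (det3 (D 1 t) (D 2 t) (D 4 t)) t := by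
      intro t
      have h1 := (hd 3 t).inner (𝕜 := ℝ) ((hd 1 t).cross3' (hd 2 t))
      refine h1.congr_deriv (Eq.symm ?_)
      rw [det3_eq_inner]
      simp only [show (1+1:ℕ)=2 from rfl, show (2+1:ℕ)=3 from rfl, show (3+1:ℕ)=4 from rfl,
        cross3_self, zero_add, inner_add_right, inner_cross_right]
    -- the ratio τ/κ is constant
    have hrel : ∀ t, ⟪D 2 t, D 2 t⟫ * det3 (D 1 t) (D 2 t) (D 4 t)
        = 3 * ⟪D 2 t, D 3 t⟫ * F t := by
      intro t
      have h1 := frenet_key1 (c1 t) (c2 t) (c3 t) (c4 t) (hane t)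
      rw [H t] at h1
      rw [hFdet t]
      linarith
    set c : ℝ → ℝ := fun t => F t / (k t)^3 with hcdef
    have hdc : ∀ t, HasDerivAt c 0 t := by
      intro t
      have h1 := (hdF t).div ((hdk t).pow 3) (pow_ne_zero 3 (hkne t))
      refine h1.congr_deriv (Eq.symm ?_)
      have h2 := hrel t
      rw [← hk2 t] at h2
      have hkn := hkne t
      set ab := ⟪D 2 t, D 3 t⟫ with habd
      clear_value ab
      rw [eq_comm, div_eq_zero_iff]
      left
      simp only [Pi.pow_apply]
      push_cast
      field_simp
      linear_combination (k t) * h2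
    have hdiffc : Differentiable ℝ c := fun t => (hdc t).differentiableAt
    have hcconst : ∀ t, c t = c 0 := fun t =>
      is_const_of_deriv_eq_zero hdiffc (fun s => (hdc s).deriv) t 0
    set c0 : ℝ := c 0 with hc0def
    have hF : ∀ t, F t = c0 * (k t)^3 := by
      intro t
      have h1 : F t / (k t)^3 = c0 := hcconst t
      rw [div_eq_iff (pow_ne_zero 3 (hkne t))] at h1
      rw [h1]
    set w : ℝ → E3 := fun t => c0 • D 1 t + (k t)⁻¹ • cross3 (D 1 t) (D 2 t) with hwdef
    have hdw : ∀ t, HasDerivAt w 0 t := by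
      intro t
      have hcrossd : HasDerivAt (fun s => cross3 (D 1 s) (D 2 s))
          (cross3 (D 2 t) (D 2 t) + cross3 (D 1 t) (D 3 t)) t := (hd 1 t).cross3' (hd 2 t)
      have hkinv : HasDerivAt (fun s => (k s)⁻¹) (-(⟪D 2 t, D 3 t⟫ / k t) / (k t)^2) t :=
        (hdk t).inv (hkne t)
      have h1 := ((hd 1 t).const_smul c0).add (hkinv.smul hcrossd)
      refine h1.congr_deriv (Eq.symm ?_)
      -- goal : 0 = c0 • D 2 t + ((k t)⁻¹ • (cross3 (D 2 t) (D 2 t) + cross3 (D 1 t) (D 3 t))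
      --            + (-(⟪D 2 t, D 3 t⟫ / k t) / (k t)^2) • cross3 (D 1 t) (D 2 t))
      have key := frenet_key2 (c1 t) (c2 t) (c3 t) (hane t)
      rw [← hFdet t, hF t, ← hk2 t] at key
      set ab := ⟪D 2 t, D 3 t⟫ with habd
      clear_value ab
      set X := cross3 (D 1 t) (D 2 t) with hX
      set Y := cross3 (D 1 t) (D 3 t) with hY
      rw [cross3_self]
      have h3 : (k t)^3 • (c0 • D 2 t + ((k t)⁻¹ • ((0:E3) + Y)
          + (-(ab / k t) / (k t)^2) • X))
          = (c0 * (k t)^3) • D 2 t + ((k t)^2 • Y - ab • X) := by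
        have hkn := hkne t
        match_scalars <;> field_simp <;> ring
      rw [key] at h3
      have h4 : (k t)^3 • (c0 • D 2 t + ((k t)⁻¹ • ((0:E3) + Y)
          + (-(ab / k t) / (k t)^2) • X)) = 0 := by
        rw [h3]; module
      rcases smul_eq_zero.1 h4 with h | h
      · exact absurd h (pow_ne_zero 3 (hkne t))
      · exact h.symm
    have hdiffw : Differentiable ℝ w := fun t => (hdw t).differentiableAt
    have hwconst : ∀ t, w t = w 0 := fun t =>
      is_const_of_deriv_eq_zero hdiffw (fun s => (hdw s).deriv) t 0
    set s0 : ℝ := Real.sqrt (1 + c0^2) with hs0def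
    have hs0pos : 0 < s0 := Real.sqrt_pos.2 (by positivity)
    have hs02 : s0^2 = 1 + c0^2 := Real.sq_sqrt (by positivity)
    have hinnerw : ∀ t, ⟪w t, w t⟫ = 1 + c0^2 := by
      intro t
      simp only [hwdef]
      simp only [inner_add_left, inner_add_right, real_inner_smul_left, real_inner_smul_right]
      rw [c1 t, inner_cross_left, lagrange, c1 t, c2 t,
        real_inner_comm (D 1 t) (cross3 (D 1 t) (D 2 t)), inner_cross_left, ← hk2 t]
      field_simp [hkne t]
      ring
    refine ⟨s0⁻¹ • w 0, ?_, s0⁻¹ * c0, ?_⟩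
    · have h1 : ⟪s0⁻¹ • w 0, s0⁻¹ • w 0⟫ = 1 := by
        rw [real_inner_smul_left, real_inner_smul_right, hinnerw 0, ← hs02]
        field_simp
      have h2 : ‖s0⁻¹ • w 0‖^2 = 1 := by rw [← real_inner_self_eq_norm_sq, h1]
      nlinarith [norm_nonneg (s0⁻¹ • w 0)]
    · intro t
      rw [hderiv1, ← hwconst t, real_inner_smul_right]
      have h1 : ⟪D 1 t, w t⟫ = c0 := by
        simp only [hwdef]
        rw [inner_add_right, real_inner_smul_right, real_inner_smul_right, c1 t, inner_cross_left]
        ring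
      rw [h1]
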